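/- In the polynomial ring ℚ[w1,w2,w3,τ], substitute u1 = w2 + w3, u2 = w1 + w3, u3 = w1 + w2. Then 12·det(q0(u) + τ·q∞(u)) = (5τ² + 3)·P0(w) + (τ³ − τ)·P∞(w), where q0(u) and q∞(u) are the explicit symmetric 3×3 matrices in the context, P0(w) = (w2² − w3²)(w3² − w1²)(w1² − w2²), and P∞(w) = w1⁶ + w2⁶ + w3⁶ + (w1² + w2² + w3²)(w1⁴ + w2⁴ + w3⁴) − 12w1²w2²w3². (This computes the discriminant curve of the conic bundle on the S6-invariant quartics and identifies it with the member Δ_{s(τ)} of the Wiman–Edge pencil, where s(τ) = (τ³−τ)/(5τ²+3); Lemma 3.11 and Theorem 1.3.) -/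

import Mathlib

open MvPolynomial

namespace Stmt4

noncomputable section

/-- The polynomial ring ℚ[w1,w2,w3,τ]. -/
abbrev R : Type := MvPolynomial (Fin 4) ℚ

def w1 : R := X 0
def w2 : R := X 1
def w3 : R := X 2
def τ : R := X 3

/-- The substitution u1 = w2 + w3, u2 = w1 + w3, u3 = w1 + w2. -/
def u1 : R := w2 + w3
def u2 : R := w1 + w3
def u3 : R := w1 + w2

/-- The symmetric matrix q0(u). -/
def q0 : Matrix (Fin 3) (Fin 3) R :=
  !![0,                         C (1/2 : ℚ) * (u3*(u2 - u1)), C (1/2 : ℚ) * (u2*(u1 - u3));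
     C (1/2 : ℚ) * (u3*(u2 - u1)), 0,                         C (1/2 : ℚ) * (u1*(u3 - u2));
     C (1/2 : ℚ) * (u2*(u1 - u3)), C (1/2 : ℚ) * (u1*(u3 - u2)), 0]

/-- The symmetric matrix q∞(u). -/
def qinf : Matrix (Fin 3) (Fin 3) R :=
  !![C (2/3 : ℚ) * (u2^2 - u2*u3 + u3^2),
       C (1/6 : ℚ) * (u3*(u1 + u2) - 2*u1*u2 - 2*u3^2),
       C (1/6 : ℚ) * (u2*(u1 + u3) - 2*u1*u3 - 2*u2^2);
     C (1/6 : ℚ) * (u3*(u1 + u2) - 2*u1*u2 - 2*u3^2),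
       C (2/3 : ℚ) * (u1^2 - u1*u3 + u3^2),
       C (1/6 : ℚ) * (u1*(u2 + u3) - 2*u2*u3 - 2*u1^2);
     C (1/6 : ℚ) * (u2*(u1 + u3) - 2*u1*u3 - 2*u2^2),
       C (1/6 : ℚ) * (u1*(u2 + u3) - 2*u2*u3 - 2*u1^2),
       C (2/3 : ℚ) * (u1^2 - u1*u2 + u2^2)]

/-- The sextic P0 defining (together with P∞) the Wiman–Edge pencil. -/
def P0 : R := (w2^2 - w3^2) * (w3^2 - w1^2) * (w1^2 - w2^2)

/-- The sextic P∞. -/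
def Pinf : R :=
  w1^6 + w2^6 + w3^6 + (w1^2 + w2^2 + w3^2) * (w1^4 + w2^4 + w3^4) - 12*w1^2*w2^2*w3^2

end

/-! Clearing denominators, `6 • q0(u)` and `6 • q∞(u)` have integer entries, and
`det (6 • M) = 216 * det M` for a 3×3 matrix. The identity for the scaled pencil is a polynomial
identity over `ℤ`, so it holds in every commutative ring and is checked by expanding the
determinant; dividing by `18` in the domain `ℚ[w1,w2,w3,τ]` gives the theorem. -/

variable {A : Type*} [CommRing A]

def sixQ0 (u1 u2 u3 : A) : Matrix (Fin 3) (Fin 3) A :=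
  !![0,                  3 * (u3*(u2 - u1)), 3 * (u2*(u1 - u3));
     3 * (u3*(u2 - u1)), 0,                  3 * (u1*(u3 - u2));
     3 * (u2*(u1 - u3)), 3 * (u1*(u3 - u2)), 0]

def sixQinf (u1 u2 u3 : A) : Matrix (Fin 3) (Fin 3) A :=
  !![4 * (u2^2 - u2*u3 + u3^2),
       u3*(u1 + u2) - 2*u1*u2 - 2*u3^2,
       u2*(u1 + u3) - 2*u1*u3 - 2*u2^2;
     u3*(u1 + u2) - 2*u1*u2 - 2*u3^2,
       4 * (u1^2 - u1*u3 + u3^2),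
       u1*(u2 + u3) - 2*u2*u3 - 2*u1^2;
     u2*(u1 + u3) - 2*u1*u3 - 2*u2^2,
       u1*(u2 + u3) - 2*u2*u3 - 2*u1^2,
       4 * (u1^2 - u1*u2 + u2^2)]

theorem det_sixQ0_add_smul_sixQinf (w1 w2 w3 t : A) :
    (sixQ0 (w2 + w3) (w1 + w3) (w1 + w2) + t • sixQinf (w2 + w3) (w1 + w3) (w1 + w2)).det =
      18 * ((5*t^2 + 3) * ((w2^2 - w3^2) * (w3^2 - w1^2) * (w1^2 - w2^2)) +
        (t^3 - t) * (w1^6 + w2^6 + w3^6 + (w1^2 + w2^2 + w3^2) * (w1^4 + w2^4 + w3^4)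
          - 12*w1^2*w2^2*w3^2)) := by
  simp [Matrix.det_fin_three, sixQ0, sixQinf]
  ring

theorem six_smul_q0 : (6 : R) • q0 = sixQ0 u1 u2 u3 := by
  have h : (6 : R) * C 2⁻¹ = 3 := by
    rw [← map_ofNat C 6, ← map_ofNat C 3, ← map_mul]; norm_num
  ext i j : 1
  fin_cases i <;> fin_cases j <;> simp [q0, sixQ0, ← mul_assoc, h]

theorem six_smul_qinf : (6 : R) • qinf = sixQinf u1 u2 u3 := by
  have h₁ : (6 : R) * C 6⁻¹ = 1 := by
    rw [← map_ofNat C 6, ← map_one C, ← map_mul]; norm_num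
  have h₂ : (6 : R) * C (2 / 3) = 4 := by
    rw [← map_ofNat C 6, ← map_ofNat C 4, ← map_mul]; norm_num
  ext i j : 1
  fin_cases i <;> fin_cases j <;> simp [qinf, sixQinf, ← mul_assoc, h₁, h₂]

/-- Lemma 3.11: the discriminant of the conic bundle q0(u) + τ·q∞(u) is the member
Δ_{s(τ)} of the Wiman–Edge pencil, where s(τ) = (τ³−τ)/(5τ²+3). -/
theorem discriminant_is_wiman_edge :
    12 * (q0 + τ • qinf).det = (5*τ^2 + 3) * P0 + (τ^3 - τ) * Pinf := by
  refine mul_left_cancel₀ (by norm_num : (18 : R) ≠ 0) ?_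
  calc 18 * (12 * (q0 + τ • qinf).det) = ((6 : R) • (q0 + τ • qinf)).det := by
        rw [Matrix.det_smul, Fintype.card_fin]; ring
    _ = (sixQ0 u1 u2 u3 + τ • sixQinf u1 u2 u3).det := by
        rw [smul_add, smul_comm, six_smul_q0, six_smul_qinf]
    _ = 18 * ((5*τ^2 + 3) * P0 + (τ^3 - τ) * Pinf) :=
        det_sixQ0_add_smul_sixQinf w1 w2 w3 τ

end Stmt4
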